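/- Let T = (g, h, ρ) be an abelian type. If either (i) h is a torus, or (ii) h is p-nilpotent and g is a torus, then T is permissible. -/

import Mathlib

set_option linter.unusedSectionVars false

open scoped TensorProduct

attribute [local instance 100] LieRing.ofAssociativeRing

namespace PD

/-- An abelian restricted Lie algebra over `k` (of characteristic `p`): an abelian Lie
algebra (trivial bracket) together with its restricted `p`-th power map, which for an
abelian Lie algebra is additive and Frobenius-semilinear. -/
class AbRes (p : ℕ) (k : Type) (V : Type) [Field k] [AddCommGroup V] [Module k V] :
    Type where
  pMap : V → V
  pMap_add : ∀ x y : V, pMap (x + y) = pMap x + pMap y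
  pMap_smul : ∀ (a : k) (x : V), pMap (a • x) = a ^ p • pMap x

/-- Type synonym equipping a module with its trivial (abelian) Lie algebra structure. -/
def Ab (V : Type) : Type := V

instance (V : Type) [AddCommGroup V] : AddCommGroup (Ab V) := inferInstanceAs (AddCommGroup V)

instance (k V : Type) [Field k] [AddCommGroup V] [Module k V] : Module k (Ab V) :=
  inferInstanceAs (Module k V)

instance (V : Type) [AddCommGroup V] : LieRing (Ab V) :=
  { (inferInstanceAs (AddCommGroup (Ab V)) : AddCommGroup (Ab V)) with
    bracket := fun _ _ => 0
    add_lie := by intros; simp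
    lie_add := by intros; simp
    lie_self := by intros; rfl
    leibniz_lie := by intros; simp }

instance (k V : Type) [Field k] [AddCommGroup V] [Module k V] : LieAlgebra k (Ab V) :=
  { (inferInstanceAs (Module k (Ab V)) : Module k (Ab V)) with
    lie_smul := by intros; show (0 : Ab V) = _ • (0 : Ab V); simp }

/-- The identity of `V`, viewed as a linear equivalence `V ≃ Ab V`. -/
def toAb (k V : Type) [Field k] [AddCommGroup V] [Module k V] : V ≃ₗ[k] Ab V :=
  LinearEquiv.refl k V

section Core

variable (p : ℕ) [Fact (Nat.Prime p)] (k : Type) [Field k] [CharP k p]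
variable (V : Type) [AddCommGroup V] [Module k V]
variable [AbRes p k V]

/-- The relation defining `u(h) = U(h)/(x^p - x^{[p]})`. -/
def uRel : UniversalEnvelopingAlgebra k (Ab V) → UniversalEnvelopingAlgebra k (Ab V) → Prop :=
  fun a b => ∃ x : V,
    a = (UniversalEnvelopingAlgebra.ι k (toAb k V x) : UniversalEnvelopingAlgebra k (Ab V)) ^ p ∧
    b = UniversalEnvelopingAlgebra.ι k (toAb k V (AbRes.pMap (p := p) (k := k) x))

/-- The restricted universal enveloping algebra `u(h) := U(h)/(x^p − x^{[p]}, x ∈ h)`. -/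
abbrev uRes : Type := RingQuot (uRel p k V)

/-- The canonical linear map `h → u(h)`. -/
noncomputable def mkι : V →ₗ[k] uRes p k V :=
  (RingQuot.mkAlgHom k (uRel p k V)).toLinearMap.comp
    ((UniversalEnvelopingAlgebra.ι k).toLinearMap.comp (toAb k V).toLinearMap)

lemma uea_comm (a b : Ab V) :
    (UniversalEnvelopingAlgebra.ι k a : UniversalEnvelopingAlgebra k (Ab V)) *
      UniversalEnvelopingAlgebra.ι k b =
    UniversalEnvelopingAlgebra.ι k b * UniversalEnvelopingAlgebra.ι k a := by
  have h := (UniversalEnvelopingAlgebra.ι (R := k) (L := Ab V)).map_lie a b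
  rw [show ⁅a, b⁆ = (0 : Ab V) from rfl, map_zero,
    LieRing.of_associative_ring_bracket] at h
  exact sub_eq_zero.1 h.symm

lemma mkι_comm (x y : V) : mkι p k V x * mkι p k V y = mkι p k V y * mkι p k V x := by
  show (RingQuot.mkAlgHom k (uRel p k V)) (UniversalEnvelopingAlgebra.ι k (toAb k V x)) *
      (RingQuot.mkAlgHom k (uRel p k V)) (UniversalEnvelopingAlgebra.ι k (toAb k V y)) = _
  rw [← map_mul (RingQuot.mkAlgHom k (uRel p k V)), uea_comm, map_mul]
  rfl

lemma mkι_pow (x : V) :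
    mkι p k V x ^ p = mkι p k V (AbRes.pMap (p := p) (k := k) x) := by
  show (RingQuot.mkAlgHom k (uRel p k V)) (UniversalEnvelopingAlgebra.ι k (toAb k V x)) ^ p = _
  rw [← map_pow]
  exact RingQuot.mkAlgHom_rel k ⟨x, rfl, rfl⟩

/-- Freshman's dream in any `k`-algebra (`k` of characteristic `p`), for commuting
elements. -/
lemma add_pow_charP {A : Type} [Ring A] [Algebra k A] {x y : A} (h : Commute x y) :
    (x + y) ^ p = x ^ p + y ^ p := by
  obtain ⟨r, hr⟩ := h.exists_add_pow_prime_eq (Fact.out : Nat.Prime p)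
  have hp0 : ((p : ℕ) : A) = 0 := by
    rw [← map_natCast (algebraMap k A) p, CharP.cast_eq_zero k p, map_zero]
  rw [hr, hp0]
  simp only [zero_mul, add_zero]

/-- Build a Lie algebra morphism (for the trivial bracket on `V`) from a linear map with
pairwise commuting images. -/
noncomputable def lieHomOfLinear {A : Type} [Ring A] [Algebra k A] (f : V →ₗ[k] A)
    (hf : ∀ x y : V, f x * f y = f y * f x) : Ab V →ₗ⁅k⁆ A :=
  { toLinearMap := f.comp (toAb k V).symm.toLinearMap
    map_lie' := by
      intro x y
      show f.comp (toAb k V).symm.toLinearMap ((0 : Ab V)) = ⁅_, _⁆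
      rw [LieRing.of_associative_ring_bracket]
      simp only [map_zero]
      exact (sub_eq_zero.2 (hf _ _)).symm }

/-- The universal property of `u(h)`: a linear map `f : h → A` with commuting images
satisfying `f(x)^p = f(x^{[p]})` extends to an algebra map `u(h) → A`. -/
noncomputable def extendAlg {A : Type} [Ring A] [Algebra k A] (f : V →ₗ[k] A)
    (hf : ∀ x y : V, f x * f y = f y * f x)
    (hp : ∀ x : V, f x ^ p = f (AbRes.pMap (p := p) (k := k) x)) :
    uRes p k V →ₐ[k] A :=
  RingQuot.liftAlgHom k
    ⟨UniversalEnvelopingAlgebra.lift k (lieHomOfLinear (k := k) (V := V) f hf), by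
      rintro a b ⟨x, rfl, rfl⟩
      simp only [map_pow, UniversalEnvelopingAlgebra.lift_ι_apply]
      exact hp x⟩

@[simp] lemma extendAlg_mkι {A : Type} [Ring A] [Algebra k A] (f : V →ₗ[k] A)
    (hf : ∀ x y : V, f x * f y = f y * f x)
    (hp : ∀ x : V, f x ^ p = f (AbRes.pMap (p := p) (k := k) x)) (x : V) :
    extendAlg p k V f hf hp (mkι p k V x) = f x := by
  show RingQuot.liftAlgHom k _
    ((RingQuot.mkAlgHom k (uRel p k V)) (UniversalEnvelopingAlgebra.ι k (toAb k V x))) = f x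
  rw [RingQuot.liftAlgHom_mkAlgHom_apply, UniversalEnvelopingAlgebra.lift_ι_apply]
  rfl

/-- The counit `ε : u(h) → k`. -/
noncomputable def counit : uRes p k V →ₐ[k] k :=
  extendAlg p k V (0 : V →ₗ[k] k) (by intros; simp) (by
    intro x
    simp [zero_pow (Nat.Prime.ne_zero (Fact.out : Nat.Prime p))])

/-- The augmentation ideal `u(h)⁺`, as a submodule. -/
noncomputable def Aplus : Submodule k (uRes p k V) :=
  LinearMap.ker (counit p k V).toLinearMap

/-- `(u(h)⁺)^{⊗2}` viewed inside `u(h) ⊗ u(h)`. -/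
noncomputable def AplusSq : Submodule k (uRes p k V ⊗[k] uRes p k V) :=
  Submodule.map₂ (TensorProduct.mk k (uRes p k V) (uRes p k V)) (Aplus p k V) (Aplus p k V)

/-- The comultiplication `Δ : u(h) → u(h) ⊗ u(h)`, the algebra map making every element
of `h` primitive. -/
noncomputable def comul : uRes p k V →ₐ[k] uRes p k V ⊗[k] uRes p k V :=
  extendAlg p k V
    (((TensorProduct.mk k (uRes p k V) (uRes p k V)).flip 1).comp (mkι p k V)
      + (TensorProduct.mk k (uRes p k V) (uRes p k V) 1).comp (mkι p k V))
    (by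
      intro x y
      simp only [LinearMap.add_apply, LinearMap.coe_comp, Function.comp_apply,
        TensorProduct.mk_apply, LinearMap.flip_apply]
      simp only [add_mul, mul_add, Algebra.TensorProduct.tmul_mul_tmul, one_mul, mul_one,
        mkι_comm p k V x y]
      abel)
    (by
      intro x
      simp only [LinearMap.add_apply, LinearMap.coe_comp, Function.comp_apply,
        TensorProduct.mk_apply, LinearMap.flip_apply]
      have hc : Commute ((mkι p k V x) ⊗ₜ[k] (1 : uRes p k V))
          ((1 : uRes p k V) ⊗ₜ[k] (mkι p k V x)) := by
        unfold Commute SemiconjBy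
        simp [Algebra.TensorProduct.tmul_mul_tmul]
      rw [add_pow_charP p k hc, Algebra.TensorProduct.tmul_pow, Algebra.TensorProduct.tmul_pow,
        one_pow, mkι_pow])

/-- The first cobar differential `∂¹(r) = 1 ⊗ r − Δ(r) + r ⊗ 1`. -/
noncomputable def d1 : uRes p k V →ₗ[k] uRes p k V ⊗[k] uRes p k V :=
  TensorProduct.mk k (uRes p k V) (uRes p k V) 1 - (comul p k V).toLinearMap
    + (TensorProduct.mk k (uRes p k V) (uRes p k V)).flip 1

/-- The second cobar differential `∂²(r ⊗ s) = 1 ⊗ r ⊗ s − Δ(r) ⊗ s + r ⊗ Δ(s) − r ⊗ s ⊗ 1`. -/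
noncomputable def d2 : uRes p k V ⊗[k] uRes p k V →ₗ[k]
    uRes p k V ⊗[k] (uRes p k V ⊗[k] uRes p k V) :=
  TensorProduct.mk k (uRes p k V) (uRes p k V ⊗[k] uRes p k V) 1
    - (TensorProduct.assoc k (uRes p k V) (uRes p k V) (uRes p k V)).toLinearMap.comp
        (LinearMap.rTensor (uRes p k V) (comul p k V).toLinearMap)
    + LinearMap.lTensor (uRes p k V) (comul p k V).toLinearMap
    - (TensorProduct.assoc k (uRes p k V) (uRes p k V) (uRes p k V)).toLinearMap.comp
        ((TensorProduct.mk k (uRes p k V ⊗[k] uRes p k V) (uRes p k V)).flip 1)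

/-- The element `ω(r) = ∑_{i=1}^{p−1} ((p−1)!/(i!(p−i)!)) rⁱ ⊗ r^{p−i}`. -/
noncomputable def omega (r : uRes p k V) : uRes p k V ⊗[k] uRes p k V :=
  ∑ i ∈ Finset.Ico 1 p,
    ((Nat.factorial (p-1) / (Nat.factorial i * Nat.factorial (p - i)) : ℕ) : k) •
      ((r ^ i) ⊗ₜ[k] (r ^ (p - i)))

/-- The extension of `ρ_z : h → h` (with `ρ_z ∘ [p] = 0`) to a derivation of `u(h)`,
constructed through the trivial square-zero extension. -/
noncomputable def Dres (f : V →ₗ[k] V)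
    (hf : ∀ x : V, f (AbRes.pMap (p := p) (k := k) x) = 0) :
    uRes p k V →ₗ[k] uRes p k V :=
  ((TrivSqZeroExt.sndHom (uRes p k V) (uRes p k V)).restrictScalars k).comp
    (extendAlg p k V
      ({ toFun := fun x => TrivSqZeroExt.inl (mkι p k V x)
              + TrivSqZeroExt.inr (mkι p k V (f x))
         map_add' := by
          intro x y
          simp only [map_add, TrivSqZeroExt.inl_add, TrivSqZeroExt.inr_add]
          abel
         map_smul' := by
          intro c x
          simp only [map_smul, TrivSqZeroExt.inl_smul, TrivSqZeroExt.inr_smul, smul_add,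
            RingHom.id_apply] } : V →ₗ[k] TrivSqZeroExt (uRes p k V) (uRes p k V))
      (by
        intro x y
        simp only [LinearMap.coe_mk, AddHom.coe_mk]
        simp only [add_mul, mul_add, TrivSqZeroExt.inl_mul_inl, TrivSqZeroExt.inl_mul_inr,
          TrivSqZeroExt.inr_mul_inl, TrivSqZeroExt.inr_mul_inr, smul_eq_mul,
          MulOpposite.smul_eq_mul_unop, MulOpposite.unop_op]
        rw [mkι_comm p k V x y, mkι_comm p k V x (f y), mkι_comm p k V (f x) y]
        abel
      )
      (by
        intro x
        simp only [LinearMap.coe_mk, AddHom.coe_mk]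
        have hc : Commute
            (TrivSqZeroExt.inl (mkι p k V x) : TrivSqZeroExt (uRes p k V) (uRes p k V))
            (TrivSqZeroExt.inr (mkι p k V (f x))) := by
          unfold Commute SemiconjBy
          rw [TrivSqZeroExt.inl_mul_inr, TrivSqZeroExt.inr_mul_inl, smul_eq_mul,
            MulOpposite.smul_eq_mul_unop, MulOpposite.unop_op, mkι_comm]
        rw [add_pow_charP p k hc]
        have h2 : (TrivSqZeroExt.inr (mkι p k V (f x)) :
            TrivSqZeroExt (uRes p k V) (uRes p k V)) ^ p = 0 := by
          have h2' : (TrivSqZeroExt.inr (mkι p k V (f x)) :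
              TrivSqZeroExt (uRes p k V) (uRes p k V)) ^ 2 = 0 := by
            rw [sq, TrivSqZeroExt.inr_mul_inr]
          have hle : 2 + (p - 2) = p := by
            have := (Fact.out : Nat.Prime p).two_le
            omega
          have hv : (TrivSqZeroExt.inr (mkι p k V (f x)) :
              TrivSqZeroExt (uRes p k V) (uRes p k V)) ^ p
              = (TrivSqZeroExt.inr (mkι p k V (f x)) :
              TrivSqZeroExt (uRes p k V) (uRes p k V)) ^ (2 + (p - 2)) := by rw [hle]
          rw [hv, pow_add, h2', zero_mul]
        have h3 : (TrivSqZeroExt.inl (mkι p k V x) :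
            TrivSqZeroExt (uRes p k V) (uRes p k V)) ^ p
            = TrivSqZeroExt.inl ((mkι p k V x) ^ p) :=
          (map_pow (TrivSqZeroExt.inlHom (uRes p k V) (uRes p k V)) (mkι p k V x) p).symm
        rw [h2, add_zero, h3, mkι_pow, hf x, map_zero, TrivSqZeroExt.inr_zero, add_zero]
      )).toLinearMap

/-- The action of `ρ_z` on `u(h) ⊗ u(h)`, i.e. `ρ ⊗ 1 + 1 ⊗ ρ`. -/
noncomputable def Dtens (f : V →ₗ[k] V)
    (hf : ∀ x : V, f (AbRes.pMap (p := p) (k := k) x) = 0) :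
    uRes p k V ⊗[k] uRes p k V →ₗ[k] uRes p k V ⊗[k] uRes p k V :=
  LinearMap.rTensor (uRes p k V) (Dres p k V f hf)
    + LinearMap.lTensor (uRes p k V) (Dres p k V f hf)

/-- `Φ_z` in (cobar) degree 1: `Φ_z(r) = r^p − λ r + ρ_z^{p−1}(r)`. -/
noncomputable def Phi1 (lam : k) (f : V →ₗ[k] V)
    (hf : ∀ x : V, f (AbRes.pMap (p := p) (k := k) x) = 0) (r : uRes p k V) : uRes p k V :=
  r ^ p - lam • r + ((Dres p k V f hf) ^ (p - 1) : uRes p k V →ₗ[k] uRes p k V) r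

/-- `Φ_z` in (cobar) degree 2: `Φ_z(χ) = χ^p − λ χ + (ρ_z ⊗ 1 + 1 ⊗ ρ_z)^{p−1}(χ)`,
the `p`-th power being the one of the ring `u(h) ⊗ u(h)`. -/
noncomputable def Phi2 (lam : k) (f : V →ₗ[k] V)
    (hf : ∀ x : V, f (AbRes.pMap (p := p) (k := k) x) = 0)
    (χ : uRes p k V ⊗[k] uRes p k V) : uRes p k V ⊗[k] uRes p k V :=
  χ ^ p - lam • χ
    + ((Dtens p k V f hf) ^ (p - 1) :
        uRes p k V ⊗[k] uRes p k V →ₗ[k] uRes p k V ⊗[k] uRes p k V) χ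

end Core

section Rep

variable (p : ℕ) [Fact (Nat.Prime p)] (k : Type) [Field k] [CharP k p]
variable {G V : Type} [AddCommGroup G] [Module k G] [AddCommGroup V] [Module k V]
variable [AbRes p k G] [AbRes p k V]

/-- An algebraic representation of the abelian restricted Lie algebra `g` on the abelian
restricted Lie algebra `h` (conditions (i)–(iv) of the definition of an algebraic
representation, specialized to abelian restricted Lie algebras: condition (iii) is then
vacuous, and in condition (iv) the right-hand side vanishes). -/
structure IsAlgebraicRep (ρ : G →ₗ[k] Module.End k V) : Prop where
  comm : ∀ x y : G, ρ x * ρ y = ρ y * ρ x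
  map_pMap : ∀ x : G, ρ (AbRes.pMap (p := p) (k := k) x) = ρ x ^ p
  annih : ∀ (x : G) (a : V), ρ x (AbRes.pMap (p := p) (k := k) a) = 0

end Rep


section More

variable (p : ℕ) [Fact (Nat.Prime p)] (k : Type) [Field k] [CharP k p]
variable (V : Type) [AddCommGroup V] [Module k V] [AbRes p k V]

/-- The functorial extension of a linear map of abelian restricted Lie algebras commuting
with the restricted maps, to an algebra map `u(h) → u(h')` (a morphism of Hopf algebras). -/
noncomputable def uResMap (W : Type) [AddCommGroup W] [Module k W] [AbRes p k W]
    (f : V →ₗ[k] W)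
    (hcompat : ∀ x : V, f (AbRes.pMap (p := p) (k := k) x)
      = AbRes.pMap (p := p) (k := k) (f x)) : uRes p k V →ₐ[k] uRes p k W :=
  extendAlg p k V ((mkι p k W).comp f) (fun x y => mkι_comm p k W (f x) (f y))
    (fun x => by
      simp only [LinearMap.coe_comp, Function.comp_apply]
      rw [mkι_pow, hcompat])

/-- `Φ_z` restricted to `h ⊆ u(h)`: `Φ_z(r) = r^{[p]} − λ r + ρ_z^{p−1}(r)`
(for `r ∈ h` one has `r^p = r^{[p]}` in `u(h)`). -/
noncomputable def PhiV (lam : k) (f : Module.End k V) : V → V :=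
  fun r => AbRes.pMap (p := p) (k := k) r - lam • r + (f ^ (p - 1)) r

/-- The abelian type determined by `ρ_z = f` and `z^{[p]} = λ z` is *permissible* if
`Ker ρ_z = Im Φ_z` on `h`. -/
noncomputable def Permissible (lam : k) (f : Module.End k V) : Prop :=
  {r : V | f r = 0} = Set.range (PhiV p k V lam f)

end More

section Iso

variable (p : ℕ) (k : Type) [Field k]

/-- An isomorphism of (abelian) restricted Lie algebras: a linear equivalence commuting
with the restricted maps. -/
structure RestrictedLieIso (V W : Type) [AddCommGroup V] [Module k V] [AddCommGroup W]
    [Module k W] [AbRes p k V] [AbRes p k W] extends V ≃ₗ[k] W where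
  map_pMap : ∀ x : V, toLinearEquiv (AbRes.pMap (p := p) (k := k) x)
    = AbRes.pMap (p := p) (k := k) (toLinearEquiv x)

/-- An isomorphism of abelian types `T = (g, h, ρ) → T' = (g', h', ρ')` : a pair
`(φ₁ : g' → g, φ₂ : h → h')` of restricted Lie algebra isomorphisms intertwining `ρ`
and `ρ'`. -/
structure AbTypeIso {G V G' V' : Type}
    [AddCommGroup G] [Module k G] [AddCommGroup V] [Module k V]
    [AddCommGroup G'] [Module k G'] [AddCommGroup V'] [Module k V']
    [AbRes p k G] [AbRes p k V] [AbRes p k G'] [AbRes p k V']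
    (ρ : G →ₗ[k] Module.End k V) (ρ' : G' →ₗ[k] Module.End k V') where
  e1 : RestrictedLieIso p k G' G
  e2 : RestrictedLieIso p k V V'
  compat : ∀ (x' : G') (a : V),
    e2.toLinearEquiv (ρ (e1.toLinearEquiv x') a) = ρ' x' (e2.toLinearEquiv a)

end Iso

section Hopf

variable (k : Type) [Field k]

/-- The primitive space `P(H)` of a bialgebra `H`. -/
noncomputable def primSpace (H : Type) [Ring H] [Bialgebra k H] : Submodule k H where
  carrier := {x : H | Coalgebra.comul (R := k) x = x ⊗ₜ[k] (1 : H) + (1 : H) ⊗ₜ[k] x}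
  add_mem' := by
    intro a b ha hb
    simp only [Set.mem_setOf_eq] at *
    rw [map_add, ha, hb, TensorProduct.add_tmul, TensorProduct.tmul_add]
    abel
  zero_mem' := by simp
  smul_mem' := by
    intro c x hx
    simp only [Set.mem_setOf_eq] at *
    rw [map_smul, hx, smul_add, TensorProduct.smul_tmul', ← TensorProduct.tmul_smul]

/-- A subcoalgebra of a bialgebra, as a submodule `C` with `Δ(C) ⊆ C ⊗ C`. -/
def IsSubcoalgebra (H : Type) [Ring H] [Bialgebra k H] (C : Submodule k H) : Prop :=
  ∀ x ∈ C, Coalgebra.comul (R := k) x ∈ Submodule.map₂ (TensorProduct.mk k H H) C C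

/-- A simple subcoalgebra: a nonzero subcoalgebra with no nonzero proper subcoalgebras. -/
def IsSimpleSubcoalgebra (H : Type) [Ring H] [Bialgebra k H] (C : Submodule k H) : Prop :=
  C ≠ ⊥ ∧ IsSubcoalgebra k H C ∧
    ∀ D ≤ C, IsSubcoalgebra k H D → D = ⊥ ∨ D = C

/-- The coradical of a bialgebra: the sum of all its simple subcoalgebras. -/
noncomputable def coradical (H : Type) [Ring H] [Bialgebra k H] : Submodule k H :=
  sSup {C | IsSimpleSubcoalgebra k H C}

/-- A (finite-dimensional) bialgebra is connected if its coradical is one-dimensional. -/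
def IsConnectedCoalg (H : Type) [Ring H] [Bialgebra k H] : Prop :=
  Module.finrank k ↥(coradical k H) = 1

/-- An isomorphism of Hopf algebras: an algebra isomorphism compatible with the
comultiplications and the counits. -/
structure HopfAlgIso (H1 H2 : Type) [Ring H1] [Ring H2] [HopfAlgebra k H1]
    [HopfAlgebra k H2] extends H1 ≃ₐ[k] H2 where
  map_comul : ∀ a : H1, Coalgebra.comul (R := k) (toAlgEquiv a)
      = TensorProduct.map toAlgEquiv.toLinearMap toAlgEquiv.toLinearMap
          (Coalgebra.comul (R := k) a)
  map_counit : ∀ a : H1, Coalgebra.counit (R := k) (toAlgEquiv a) = Coalgebra.counit (R := k) a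

end Hopf

section Realization

variable (p : ℕ) [Fact (Nat.Prime p)] (k : Type) [Field k] [CharP k p]
variable (n : ℕ) (V : Type) [AddCommGroup V] [Module k V] [AbRes p k V]

/-- A realization of the primitive deformation `u_z(D)` of `u(T)` associated to a datum
`D = (T, Θ, χ)` and `0 ≠ z ∈ g` with `z^{[p]} = λ z`: a connected Hopf algebra `H` of
dimension `p^{n+1}` containing `u(h)` as a Hopf subalgebra and an element `Z` satisfying
the deformed relations `[Z, r] = ρ_z(r)`, `Z^p − λZ + Θ = 0`,
`Δ(Z) = Z ⊗ 1 + 1 ⊗ Z + χ`, generating `H` over `u(h)`, and whose primitive space is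
exactly (the image of) `h`.  Here `D : u(h) → u(h)` is the derivation extending `ρ_z`. -/
structure PDRealization (D : uRes p k V →ₗ[k] uRes p k V) (lam : k) (Θ : uRes p k V)
    (χ : uRes p k V ⊗[k] uRes p k V) : Type 1 where
  H : Type
  [ringH : Ring H]
  [hopfH : HopfAlgebra k H]
  findim : Module.finrank k H = p ^ (n + 1)
  connected : IsConnectedCoalg k H
  j : uRes p k V →ₐ[k] H
  j_inj : Function.Injective j
  j_comul : ∀ a : uRes p k V, Coalgebra.comul (R := k) (j a)
      = TensorProduct.map j.toLinearMap j.toLinearMap (comul p k V a)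
  j_counit : ∀ a : uRes p k V, Coalgebra.counit (R := k) (j a) = counit p k V a
  Z : H
  gen : Algebra.adjoin k (Set.range j ∪ {Z}) = ⊤
  commZ : ∀ a : uRes p k V, Z * j a - j a * Z = j (D a)
  powZ : Z ^ p - lam • Z + j Θ = 0
  comulZ : Coalgebra.comul (R := k) Z
      = Z ⊗ₜ[k] (1 : H) + (1 : H) ⊗ₜ[k] Z
        + TensorProduct.map j.toLinearMap j.toLinearMap χ
  prim : primSpace k H = Submodule.map (j.toLinearMap ∘ₗ mkι p k V) ⊤

/-- `D = (T, Θ, χ)` is a PD datum with respect to `z` (with `z^{[p]} = λz` and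
`D` the derivation of `u(h)` extending `ρ_z`) iff the corresponding primitive
deformation `u_z(D)` exists, i.e. is a `p^{n+1}`-dimensional connected Hopf algebra whose
primitive space is (isomorphic to) `h`. -/
def IsPDDatum (D : uRes p k V →ₗ[k] uRes p k V) (lam : k) (Θ : uRes p k V)
    (χ : uRes p k V ⊗[k] uRes p k V) : Prop :=
  Nonempty (PDRealization p k n V D lam Θ χ)

/-- Hopf algebra isomorphisms between (the underlying Hopf algebras of) two primitive
deformation realizations. -/
def RealIso {n' : ℕ} {V' : Type} [AddCommGroup V'] [Module k V'] [AbRes p k V']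
    {D : uRes p k V →ₗ[k] uRes p k V} {lam : k} {Θ : uRes p k V}
    {χ : uRes p k V ⊗[k] uRes p k V}
    {D' : uRes p k V' →ₗ[k] uRes p k V'} {lam' : k} {Θ' : uRes p k V'}
    {χ' : uRes p k V' ⊗[k] uRes p k V'}
    (R : PDRealization p k n V D lam Θ χ)
    (R' : PDRealization p k n' V' D' lam' Θ' χ') : Type :=
  letI := R.ringH; letI := R.hopfH; letI := R'.ringH; letI := R'.hopfH
  HopfAlgIso k R.H R'.H

end Realization

section Points

variable (p n : ℕ) [Fact (Nat.Prime p)] (k : Type) [Field k] [CharP k p]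
variable (V : Type) [AddCommGroup V] [Module k V] [AbRes p k V]

/-- Index set for the coordinates `a_{ij}`, `1 ≤ i < j ≤ n`. -/
abbrev UpperIdx (n : ℕ) : Type := {ij : Fin n × Fin n // ij.1 < ij.2}

/-- A point of the affine space `𝔸^{n(n+1)/2}`, with coordinates `(a_{ij}, b_k)`. -/
abbrev Pt (n : ℕ) (k : Type) : Type := (UpperIdx n → k) × (Fin n → k)

/-- The 2-cocycle `χ_P = ∑_{i<j} a_{ij} x_i ⊗ x_j + ω(∑_k b_k x_k)` associated to a point
`P ∈ 𝔸^{n(n+1)/2}` and a basis `x` of `h`. -/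
noncomputable def chiP (x : Module.Basis (Fin n) k V) (P : Pt n k) :
    uRes p k V ⊗[k] uRes p k V :=
  (∑ q : UpperIdx n,
      P.1 q • ((mkι p k V (x q.1.1)) ⊗ₜ[k] (mkι p k V (x q.1.2))))
    + omega p k V (mkι p k V (∑ j, P.2 j • x j))

/-- A point `P` is admissible w.r.t. the type `T` if there is `s ∈ u(h)⁺` with
`Φ_z(χ_P) = ∂¹(s)` and `ρ_z(s) = 0`. -/
noncomputable def IsAdmissible (lam : k) (f : V →ₗ[k] V)
    (hf : ∀ a : V, f (AbRes.pMap (p := p) (k := k) a) = 0)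
    (x : Module.Basis (Fin n) k V) (P : Pt n k) : Prop :=
  ∃ s ∈ Aplus p k V, Phi2 p k V lam f hf (chiP p n k V x P) = d1 p k V s
    ∧ Dres p k V f hf s = 0

/-- The characterization of PD data: `(T, Θ, χ)` is a PD datum w.r.t. `z` iff `χ` is a
2-cocycle which is not a 2-coboundary, `ρ_z(Θ) = 0` and `Φ_z(χ) = ∂¹(Θ)`. -/
noncomputable def IsPDDatumC (lam : k) (f : V →ₗ[k] V)
    (hf : ∀ a : V, f (AbRes.pMap (p := p) (k := k) a) = 0)
    (Θ : uRes p k V) (χ : uRes p k V ⊗[k] uRes p k V) : Prop :=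
  Θ ∈ Aplus p k V ∧ χ ∈ AplusSq p k V ∧ d2 p k V χ = 0 ∧
    (¬ ∃ s ∈ Aplus p k V, χ = d1 p k V s) ∧
    Dres p k V f hf Θ = 0 ∧ Phi2 p k V lam f hf χ = d1 p k V Θ

/-- The equivalence relation on PD data defining `ℋ²(T)`:
`(Θ, χ) ∼ (Θ', χ')` iff `Θ' − Θ = Φ_z(s)` and `χ' − χ = ∂¹(s)` for some `s ∈ u(h)⁺`. -/
noncomputable def PDEquiv (lam : k) (f : V →ₗ[k] V)
    (hf : ∀ a : V, f (AbRes.pMap (p := p) (k := k) a) = 0)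
    (d d' : uRes p k V × (uRes p k V ⊗[k] uRes p k V)) : Prop :=
  ∃ s ∈ Aplus p k V, d'.1 - d.1 = Phi1 p k V lam f hf s ∧ d'.2 - d.2 = d1 p k V s

/-- The action of an automorphism `φ = (γ, G) ∈ Aut(T)` on points of `𝔸^{n(n+1)/2}`:
`ã_{ij} = ∑_{r<s} γ(G_{ri}G_{sj} − G_{rj}G_{si}) a_{rs}`,
`b̃_k = ∑_s γ^{1/p} G_{sk} b_s`. -/
noncomputable def actPt [PerfectRing k p] (γ : k) (Gm : Matrix (Fin n) (Fin n) k)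
    (P : Pt n k) : Pt n k :=
  (fun q' => ∑ q : UpperIdx n,
      γ * (Gm q.1.1 q'.1.1 * Gm q.1.2 q'.1.2 - Gm q.1.1 q'.1.2 * Gm q.1.2 q'.1.1) * P.1 q,
   fun j => ∑ s : Fin n, (frobeniusEquiv k p).symm γ * Gm s j * P.2 s)

end Points

end PD

/-!
Both cases come down to solving `φ r - λ • r = w` for the Frobenius-semilinear map `φ = [p]`
on `h`; the inclusion `Im Φ_z ⊆ Ker ρ_z` always holds because `ρ_z` kills `Im [p]` and
`ρ_z ^ p = ρ(z^[p]) = λ ρ_z`.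

If `[p]` is nilpotent and `λ ≠ 0`, induct on the nilpotency index of `w`: a solution `r'` for
`φ w` with `λ ^ p` in place of `λ` yields `r = λ⁻¹ • (r' - w)`. Then `λ • r = r^[p] - w` lies in
`Ker ρ_z`, and so `Φ_z r = r^[p] - λ • r`.

If `[p]` is injective, let `n` be least with `φ^[n+1] v = ∑_{i ≤ n} c i • φ^[i] v`; injectivity and
the existence of `p`-th roots force `c 0 ≠ 0`. For `r = ∑_{i ≤ n} x i • φ^[i] v`, the equation
`φ r - λ • r = v` is a triangular system in the `x i` which, over an algebraically closed field,
reduces to one polynomial equation of degree `p^(n+1)` in `x n`. With `λ = 0` this shows that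
`[p]` is onto, so `ρ_z = 0` and `Φ_z = [p] - λ`, which is onto as well.
-/

namespace PD

open Finset Polynomial Function

section Krylov

variable (k : Type*) {V : Type*} [Field k] [AddCommGroup V] [Module k V]

def iterateSpan (φ : V → V) (v : V) (m : ℕ) : Submodule k V :=
  Submodule.span k ((fun i => φ^[i] v) '' Set.Iio m)

lemma exists_iterate_mem_iterateSpan [FiniteDimensional k V] (φ : V → V) (v : V) :
    ∃ m, φ^[m] v ∈ iterateSpan k φ v m ∧ ∀ j < m, φ^[j] v ∉ iterateSpan k φ v j := by
  classical
  have hmono : Monotone (iterateSpan k φ v) := fun a b hab =>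
    Submodule.span_mono (Set.image_mono (Set.Iio_subset_Iio hab))
  obtain ⟨n, hn⟩ := monotone_stabilizes_iff_noetherian.2 inferInstance ⟨_, hmono⟩
  have hex : ∃ m, φ^[m] v ∈ iterateSpan k φ v m := by
    refine ⟨n, ?_⟩
    rw [show iterateSpan k φ v n = iterateSpan k φ v (n + 1) from hn (n + 1) n.le_succ]
    exact Submodule.subset_span ⟨n, n.lt_succ_self, rfl⟩
  exact ⟨Nat.find hex, Nat.find_spec hex, fun j hj => Nat.find_min hex hj⟩

variable {k}

lemma mem_iterateSpan_iff {φ : V → V} {v x : V} {m : ℕ} :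
    x ∈ iterateSpan k φ v m ↔ ∃ c : ℕ → k, ∑ i ∈ range m, c i • φ^[i] v = x := by
  constructor
  · rw [iterateSpan, ← coe_range, Finsupp.mem_span_image_iff_linearCombination]
    rintro ⟨l, hl, rfl⟩
    refine ⟨l, ?_⟩
    rw [Finsupp.linearCombination_apply,
      Finsupp.sum_of_support_subset l (Finset.coe_subset.1 ((Finsupp.mem_supported _ _).1 hl))]
    simp
  · rintro ⟨c, rfl⟩
    exact Submodule.sum_mem _ fun i hi =>
      Submodule.smul_mem _ _ (Submodule.subset_span ⟨i, by simpa using hi, rfl⟩)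

end Krylov

section FrobeniusSystem

/-- The coefficients of `φ^[i] v` in `φ r - λ • r = v`, for `r = ∑_{i ≤ n} x i • φ^[i] v`,
a `p`-semilinear `φ` and `φ^[n+1] v = ∑_{i ≤ n} c i • φ^[i] v`. -/
def SolvesFrobeniusSystem {k : Type*} [CommRing k] (p : ℕ) (lam : k) (c : ℕ → k) (n : ℕ)
    (x : ℕ → k) : Prop :=
  x n ^ p * c 0 - lam * x 0 = 1 ∧ ∀ i < n, x i ^ p + x n ^ p * c (i + 1) - lam * x (i + 1) = 0

variable {p : ℕ} [Fact p.Prime] {k : Type*} [Field k] [CharP k p]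

lemma exists_solvesFrobeniusSystem_zero [PerfectRing k p] {c : ℕ → k} (hc0 : c 0 ≠ 0) (n : ℕ) :
    ∃ x, SolvesFrobeniusSystem p 0 c n x := by
  set root : k → k := fun a => (frobeniusEquiv k p).symm a
  have hroot : ∀ a, root a ^ p = a := fun a => frobenius_apply_frobeniusEquiv_symm k p a
  refine ⟨fun i => if i = n then root (c 0)⁻¹ else root (-(c (i + 1) * (c 0)⁻¹)), ?_, ?_⟩
  · simp [hroot, hc0]
  · intro i hi
    simp only [if_neg hi.ne, if_true, hroot]
    ring

variable (p) in
/-- For `λ ≠ 0`, `SolvesFrobeniusSystem` determines `x 0, x 1, …` in turn from `t = x n`; this is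
`x i` as a polynomial in `t`. -/
noncomputable def solutionPoly (lam : k) (c : ℕ → k) : ℕ → k[X]
  | 0 => C lam⁻¹ * (C (c 0) * X ^ p - 1)
  | i + 1 => C lam⁻¹ * (solutionPoly lam c i ^ p + C (c (i + 1)) * X ^ p)

lemma natDegree_solutionPoly {lam : k} (hlam : lam ≠ 0) {c : ℕ → k} (hc0 : c 0 ≠ 0) (i : ℕ) :
    (solutionPoly p lam c i).natDegree = p ^ (i + 1) := by
  have hp := (Fact.out : p.Prime).one_lt
  induction i with
  | zero =>
    rw [solutionPoly, natDegree_C_mul (inv_ne_zero hlam)]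
    compute_degree!
    simp [(Fact.out : p.Prime).ne_zero, hc0]
  | succ i ih =>
    have hlt : (C (c (i + 1)) * X ^ p).natDegree < (solutionPoly p lam c i ^ p).natDegree := by
      rw [natDegree_pow, ih, ← pow_succ']
      calc _ ≤ p := natDegree_C_mul_X_pow_le _ _
        _ < p ^ (i + 1 + 1) := by
          simpa using Nat.pow_lt_pow_right hp (show 1 < i + 1 + 1 by omega)
    rw [solutionPoly, natDegree_C_mul (inv_ne_zero hlam),
      natDegree_add_eq_left_of_natDegree_lt hlt, natDegree_pow, ih, ← pow_succ']

lemma exists_solvesFrobeniusSystem_of_ne_zero [IsAlgClosed k] {lam : k} (hlam : lam ≠ 0)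
    {c : ℕ → k} (hc0 : c 0 ≠ 0) (n : ℕ) : ∃ x, SolvesFrobeniusSystem p lam c n x := by
  have hp := (Fact.out : p.Prime).one_lt
  have hdeg : (solutionPoly p lam c n - X).degree ≠ 0 := by
    have hX : (X : k[X]).natDegree < (solutionPoly p lam c n).natDegree := by
      rw [natDegree_X, natDegree_solutionPoly hlam hc0]
      exact Nat.one_lt_pow (by omega) hp
    intro h
    have h0 := natDegree_eq_of_degree_eq_some h
    rw [natDegree_sub_eq_left_of_natDegree_lt hX, natDegree_solutionPoly hlam hc0] at h0
    exact pow_ne_zero _ (by omega) h0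
  obtain ⟨t, ht⟩ := IsAlgClosed.exists_root _ hdeg
  have htn : (solutionPoly p lam c n).eval t = t := by
    simpa [sub_eq_zero] using ht
  refine ⟨fun i => (solutionPoly p lam c i).eval t, ?_, fun i _ => ?_⟩
  · simp only [htn, solutionPoly, eval_mul, eval_C, eval_sub, eval_pow, eval_X, eval_one]
    field_simp
    ring
  · simp only [htn, solutionPoly, eval_mul, eval_C, eval_add, eval_pow, eval_X]
    field_simp
    ring

lemma exists_solvesFrobeniusSystem [IsAlgClosed k] (lam : k) {c : ℕ → k} (hc0 : c 0 ≠ 0)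
    (n : ℕ) : ∃ x, SolvesFrobeniusSystem p lam c n x := by
  rcases eq_or_ne lam 0 with rfl | hlam
  · exact exists_solvesFrobeniusSystem_zero hc0 n
  · exact exists_solvesFrobeniusSystem_of_ne_zero hlam hc0 n

end FrobeniusSystem

section Surjectivity

variable {k V : Type*} [Field k] [AddCommGroup V] [Module k V]

section Frobenius

variable {p : ℕ} [Fact p.Prime] [CharP k p]

lemma coeff_zero_ne_zero_of_iterate_eq_sum [PerfectRing k p] {φ : V →ₛₗ[frobenius k p] V}
    (hφ : Injective φ) {v : V} {n : ℕ} (hn : φ^[n] v ∉ iterateSpan k φ v n) {c : ℕ → k}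
    (hc : ∑ i ∈ range (n + 1), c i • φ^[i] v = φ^[n + 1] v) : c 0 ≠ 0 := by
  intro hc0
  set d : ℕ → k := fun i => (frobeniusEquiv k p).symm (c (i + 1))
  have hφd : φ (∑ i ∈ range n, d i • φ^[i] v) = φ (φ^[n] v) := by
    simp only [map_sum, map_smulₛₗ, d, frobenius_apply_frobeniusEquiv_symm,
      ← iterate_succ_apply' φ]
    rw [← hc, sum_range_succ', hc0, zero_smul, add_zero]
  exact hn (mem_iterateSpan_iff.2 ⟨d, hφ hφd⟩)

lemma apply_sum_iterate_sub_smul_eq {φ : V →ₛₗ[frobenius k p] V} {v : V} {n : ℕ}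
    {c x : ℕ → k} {lam : k} (hc : ∑ i ∈ range (n + 1), c i • φ^[i] v = φ^[n + 1] v)
    (hx : SolvesFrobeniusSystem p lam c n x) :
    φ (∑ i ∈ range (n + 1), x i • φ^[i] v) - lam • ∑ i ∈ range (n + 1), x i • φ^[i] v = v := by
  have hφ : φ (∑ i ∈ range (n + 1), x i • φ^[i] v)
      = ∑ i ∈ range n, x i ^ p • φ^[i + 1] v + x n ^ p • ∑ i ∈ range (n + 1), c i • φ^[i] v := by
    rw [hc, map_sum, sum_range_succ]
    simp only [map_smulₛₗ, frobenius_def, ← iterate_succ_apply' φ]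
  rw [hφ, sum_range_succ' _ n, sum_range_succ' (fun i => x i • φ^[i] v) n]
  calc _ = ∑ i ∈ range n, (x i ^ p + x n ^ p * c (i + 1) - lam * x (i + 1)) • φ^[i + 1] v
          + (x n ^ p * c 0 - lam * x 0) • v := by
        simp only [smul_add, smul_sum, smul_smul, add_smul, sub_smul, sum_add_distrib,
          sum_sub_distrib, iterate_zero_apply]
        abel
    _ = v := by
      rw [sum_eq_zero fun i hi => by rw [hx.2 i (mem_range.1 hi), zero_smul], zero_add, hx.1,
        one_smul]

theorem surjective_sub_smul_of_injective [IsAlgClosed k] [FiniteDimensional k V]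
    {φ : V →ₛₗ[frobenius k p] V} (hφ : Injective φ) (lam : k) :
    Surjective fun r => φ r - lam • r := by
  intro v
  rcases eq_or_ne v 0 with rfl | hv
  · exact ⟨0, by simp⟩
  obtain ⟨m, hm, hmin⟩ := exists_iterate_mem_iterateSpan k φ v
  obtain ⟨n, rfl⟩ : ∃ n, m = n + 1 := Nat.exists_eq_succ_of_ne_zero <| by
    rintro rfl
    simp [iterateSpan, hv] at hm
  obtain ⟨c, hc⟩ := mem_iterateSpan_iff.1 hm
  obtain ⟨x, hx⟩ := exists_solvesFrobeniusSystem lam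
    (coeff_zero_ne_zero_of_iterate_eq_sum hφ (hmin n n.lt_succ_self) hc) n
  exact ⟨_, apply_sum_iterate_sub_smul_eq hc hx⟩

end Frobenius

lemma exists_sub_smul_eq_of_iterate_eq_zero {σ : k →+* k} (φ : V →ₛₗ[σ] V) {M : ℕ} {lam : k}
    {w : V} (hlam : lam ≠ 0) (hw : φ^[M] w = 0) : ∃ r, φ r - lam • r = w := by
  induction M generalizing lam w with
  | zero => exact ⟨0, by simpa using hw.symm⟩
  | succ M ih =>
    have hσ : σ lam ≠ 0 := map_ne_zero σ |>.2 hlam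
    obtain ⟨r', hr'⟩ := ih hσ (by rwa [← iterate_succ_apply])
    refine ⟨lam⁻¹ • (r' - w), ?_⟩
    have hφr : φ (lam⁻¹ • (r' - w)) = r' := by
      rw [map_smulₛₗ, map_sub, show φ r' - φ w = σ lam • r' by rw [← hr']; abel, smul_smul,
        map_inv₀, inv_mul_cancel₀ hσ, one_smul]
    rw [hφr, smul_smul, mul_inv_cancel₀ hlam, one_smul, sub_sub_cancel]

theorem surjective_sub_smul_of_iterate_eq_zero {σ : k →+* k} {φ : V →ₛₗ[σ] V}
    (hφ : ∀ w, ∃ M, φ^[M] w = 0) {lam : k} (hlam : lam ≠ 0) :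
    Surjective fun r => φ r - lam • r := fun w =>
  exists_sub_smul_eq_of_iterate_eq_zero φ hlam (hφ w).choose_spec

end Surjectivity
section Permissible

variable {p : ℕ} [Fact p.Prime] {k : Type} [Field k] [CharP k p]
variable {V : Type} [AddCommGroup V] [Module k V] [AbRes p k V]

variable (p k V) in
noncomputable def pMapₛₗ : V →ₛₗ[frobenius k p] V where
  toFun := AbRes.pMap (p := p) (k := k)
  map_add' := AbRes.pMap_add
  map_smul' a x := by rw [frobenius_def]; exact AbRes.pMap_smul a x

@[simp] lemma pMapₛₗ_apply (x : V) : pMapₛₗ p k V x = AbRes.pMap (p := p) (k := k) x := rfl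

lemma range_PhiV_subset_ker {f : Module.End k V}
    (hf : ∀ a, f (AbRes.pMap (p := p) (k := k) a) = 0) {lam : k} (hfp : f ^ p = lam • f) :
    Set.range (PhiV p k V lam f) ⊆ {r | f r = 0} := by
  rintro _ ⟨r, rfl⟩
  have hf_pow : f ((f ^ (p - 1)) r) = lam • f r := by
    rw [← Module.End.mul_apply, ← pow_succ', Nat.sub_add_cancel (Fact.out : p.Prime).one_le,
      hfp, LinearMap.smul_apply]
  simp [PhiV, hf, hf_pow]

theorem permissible_of_injective_pMap [IsAlgClosed k] [FiniteDimensional k V]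
    (hinj : ∀ a : V, AbRes.pMap (p := p) (k := k) a = 0 → a = 0) {f : Module.End k V}
    (hf : ∀ a, f (AbRes.pMap (p := p) (k := k) a) = 0) (lam : k) :
    Permissible p k V lam f := by
  have hinj' : Injective (pMapₛₗ p k V) := (injective_iff_map_eq_zero _).2 hinj
  obtain rfl : f = 0 := LinearMap.ext fun a => by
    obtain ⟨b, rfl⟩ := surjective_sub_smul_of_injective hinj' 0 a
    simpa using hf b
  have hPhi : PhiV p k V lam 0 = fun r => pMapₛₗ p k V r - lam • r := by
    ext r
    simp [PhiV, zero_pow (Nat.sub_ne_zero_of_lt (Fact.out : p.Prime).one_lt)]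
  rw [Permissible, hPhi, (surjective_sub_smul_of_injective hinj' lam).range_eq]
  simp

theorem permissible_of_pNilpotent
    (hnil : ∀ a : V, ∃ m : ℕ, (fun v : V => AbRes.pMap (p := p) (k := k) v)^[m] a = 0)
    {f : Module.End k V} (hf : ∀ a, f (AbRes.pMap (p := p) (k := k) a) = 0) {lam : k}
    (hlam : lam ≠ 0) (hfp : f ^ p = lam • f) :
    Permissible p k V lam f := by
  refine Set.Subset.antisymm (fun w hw => ?_) (range_PhiV_subset_ker hf hfp)
  obtain ⟨r, hr⟩ := surjective_sub_smul_of_iterate_eq_zero (φ := pMapₛₗ p k V) hnil hlam w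
  have hfr : f r = 0 := by
    have : lam • r = AbRes.pMap (p := p) (k := k) r - w := by
      rw [← hr]
      simp
    have h : lam • f r = 0 := by
      rw [← map_smul, this, map_sub, hf, hw, sub_zero]
    exact (smul_eq_zero.1 h).resolve_left hlam
  obtain ⟨q, hq⟩ :=
    Nat.exists_eq_succ_of_ne_zero (Nat.sub_ne_zero_of_lt (Fact.out : p.Prime).one_lt)
  refine ⟨r, ?_⟩
  simpa [PhiV, hq, pow_succ, hfr] using hr

end Permissible

end PD

open PD in
theorem permissible_of_torus_or_pnilpotent_general
    (p n : ℕ) [Fact (Nat.Prime p)] (k : Type) [Field k] [CharP k p] [IsAlgClosed k]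
    (G V : Type) [AddCommGroup G] [Module k G] [AddCommGroup V] [Module k V]
    [AbRes p k G] [AbRes p k V]
    (ρ : G →ₗ[k] Module.End k V) (hrep : IsAlgebraicRep p k ρ)
    (hh : Module.finrank k V = n) (hn : 1 ≤ n)
    (hcase :
      (∀ a : V, AbRes.pMap (p := p) (k := k) a = 0 → a = 0) ∨
      ((∀ a : V, ∃ m : ℕ, (fun v : V => AbRes.pMap (p := p) (k := k) v)^[m] a = 0) ∧
        (∀ x : G, AbRes.pMap (p := p) (k := k) x = 0 → x = 0)))
    (z : G) (hz0 : z ≠ 0)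
    (lam : k) (hlam : AbRes.pMap (p := p) (k := k) z = lam • z) :
    Permissible p k V lam (ρ z) := by
  have : FiniteDimensional k V := Module.finite_of_finrank_pos (by omega)
  rcases hcase with hinj | ⟨hnil, hGinj⟩
  · exact permissible_of_injective_pMap hinj (hrep.annih z) lam
  · have hlam0 : lam ≠ 0 := by
      rintro rfl
      exact hz0 (hGinj z (by rw [hlam, zero_smul]))
    refine permissible_of_pNilpotent hnil (hrep.annih z) hlam0 ?_
    rw [← hrep.map_pMap, hlam, map_smul]

open PD in
/-- Let `T = (g, h, ρ)` be an abelian type.  If either (i) `h` is a torus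
(no nonzero `x` with `x^{[p]} = 0`), or (ii) `h` is `p`-nilpotent (every element is
annihilated by some iterate of the restricted map) and `g` is a torus, then `T` is
permissible. -/
theorem permissible_of_torus_or_pnilpotent
    (p n : ℕ) [Fact (Nat.Prime p)] (k : Type) [Field k] [CharP k p] [IsAlgClosed k]
    (G V : Type) [AddCommGroup G] [Module k G] [AddCommGroup V] [Module k V]
    [AbRes p k G] [AbRes p k V]
    (ρ : G →ₗ[k] Module.End k V) (hrep : IsAlgebraicRep p k ρ)
    (hg : Module.finrank k G = 1) (hh : Module.finrank k V = n) (hn : 1 ≤ n)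
    (hcase :
      (∀ a : V, AbRes.pMap (p := p) (k := k) a = 0 → a = 0) ∨
      ((∀ a : V, ∃ m : ℕ, (fun v : V => AbRes.pMap (p := p) (k := k) v)^[m] a = 0) ∧
        (∀ x : G, AbRes.pMap (p := p) (k := k) x = 0 → x = 0)))
    (z : G) (hz : Submodule.span k {z} = ⊤) (hz0 : z ≠ 0)
    (lam : k) (hlam : AbRes.pMap (p := p) (k := k) z = lam • z) :
    Permissible p k V lam (ρ z) :=
  permissible_of_torus_or_pnilpotent_general p n k G V ρ hrep hh hn hcase z hz0 lam hlam
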